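/- If a MAP instance G has at least one bad-pair, then there exists a bad-pair of G such that all but one of its bp-components contain no bad-pair of G (i.e., for all but one bp-component C, no bad-pair of G has both of its nodes in V(C)). -/

import Mathlib

set_option autoImplicit false

/-!  A formal framework for the Matching Augmentation Problem (MAP):
loopless multigraphs with edge costs in `{0,1}` (given by the predicate
`isZero` marking the zero-edges). -/

/-- A finite loopless multigraph together with `{0,1}` edge costs:
`isZero e` means that the edge `e` has cost zero (otherwise it is a unit-edge). -/
structure CostGraph where
  V : Type
  E : Type
  finV : Finite V
  finE : Finite E
  ends : E → Sym2 V
  loopless : ∀ e, ¬ (ends e).IsDiag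
  isZero : E → Prop

namespace CostGraph

variable (G : CostGraph)

/-- `x` and `y` are joined by an edge of `F` and both lie in the node set `S`. -/
def Adj (S : Set G.V) (F : Set G.E) (x y : G.V) : Prop :=
  x ∈ S ∧ y ∈ S ∧ ∃ e ∈ F, G.ends e = s(x, y)

/-- Reachability in the sub-multigraph with node set `S` and edge set `F`. -/
def Reachable (S : Set G.V) (F : Set G.E) (x y : G.V) : Prop :=
  Relation.ReflTransGen (G.Adj S F) x y

/-- The sub-multigraph with node set `S` and those edges of `F` having both
end nodes in `S` is connected (in particular `S` is nonempty). -/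
def ConnectedOn (S : Set G.V) (F : Set G.E) : Prop :=
  S.Nonempty ∧ ∀ x ∈ S, ∀ y ∈ S, G.Reachable S F x y

/-- The sub-multigraph with node set `S` and edge set `F` is 2-edge-connected:
it has at least two nodes and removing any one edge leaves it connected. -/
def TwoECOn (S : Set G.V) (F : Set G.E) : Prop :=
  1 < S.ncard ∧ G.ConnectedOn S F ∧ ∀ e : G.E, G.ConnectedOn S (F \ {e})

/-- `F` is the edge set of a 2-edge-connected spanning subgraph (2-ECSS) of `G`. -/
def TwoEC (F : Set G.E) : Prop := G.TwoECOn Set.univ F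

/-- The cost of a set of edges: the number of unit-edges in it. -/
noncomputable def cost (F : Set G.E) : ℕ := {e ∈ F | ¬ G.isZero e}.ncard

/-- `opt G` is the minimum cost of a 2-ECSS of `G`. -/
noncomputable def opt : ℕ := sInf (G.cost '' {F | G.TwoEC F})

/-- `F` is a 2-edge cover: every node is incident to at least two edges of `F`. -/
def TwoEdgeCover (F : Set G.E) : Prop :=
  ∀ v : G.V, 2 ≤ {e ∈ F | v ∈ G.ends e}.ncard

/-- `tau G` is the minimum cost of a 2-edge cover of `G`. -/
noncomputable def tau : ℕ := sInf (G.cost '' {F | G.TwoEdgeCover F})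

/-- The zero-edges form a matching: no two distinct zero-edges share an end node. -/
def ZeroMatching : Prop :=
  ∀ e f : G.E, G.isZero e → G.isZero f → e ≠ f → ∀ x : G.V, x ∈ G.ends e → x ∉ G.ends f

/-- A MAP instance: a (finite, loopless) multigraph with `{0,1}` edge costs whose
zero-edges form a matching and which is 2-edge-connected. -/
def IsMAP : Prop := G.ZeroMatching ∧ G.TwoEC Set.univ

/-- The degree of a node: the number of edges incident to it. -/
noncomputable def degree (v : G.V) : ℕ := {e : G.E | v ∈ G.ends e}.ncard

/-- `e, f` form a `{0,1}`-edge-pair: parallel edges, `e` of cost zero, `f` of cost one. -/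
def IsZeroOnePair (e f : G.E) : Prop :=
  e ≠ f ∧ G.ends e = G.ends f ∧ G.isZero e ∧ ¬ G.isZero f

/-- `G` has no `{0,1}`-edge-pairs. -/
def NoZeroOnePair : Prop := ∀ e f, ¬ G.IsZeroOnePair e f

/-- `v` is a cut node: deleting `v` leaves a disconnected (or empty) graph. -/
def IsCutNode (v : G.V) : Prop := ¬ G.ConnectedOn ({v}ᶜ) Set.univ

/-- `{v, w}` is a bad-pair: `vw` is a zero-edge and deleting both `v` and `w`
disconnects the graph. -/
def IsBadPair (v w : G.V) : Prop :=
  (∃ e, G.isZero e ∧ G.ends e = s(v, w)) ∧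
    ¬ G.ConnectedOn (({v, w} : Set G.V)ᶜ) Set.univ

/-- The number of bad-pairs of `G` (counted as unordered pairs). -/
noncomputable def badPairCount : ℕ :=
  {z : Sym2 G.V | ∃ a b, z = s(a, b) ∧ G.IsBadPair a b}.ncard

/-- `C` is (the node set of) a connected component of the sub-multigraph with node
set `S` and edge set `F`. -/
def IsCompOf (S : Set G.V) (F : Set G.E) (C : Set G.V) : Prop :=
  C ⊆ S ∧ C.Nonempty ∧ G.ConnectedOn C F ∧
    ∀ x ∈ C, ∀ y ∈ S, G.Adj S F x y → y ∈ C

/-- `Q` is the node set of a redundant 4-cycle: a 4-cycle `u₁u₂u₃u₄` with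
`V(C) ≠ V(G)`, two non-adjacent edges of cost zero and two non-adjacent nodes
of degree two in `G`. -/
def IsRed4CycleOn (Q : Set G.V) : Prop :=
  ∃ (u₁ u₂ u₃ u₄ : G.V) (e₁ e₂ e₃ e₄ : G.E),
    Q = {u₁, u₂, u₃, u₄} ∧
    u₁ ≠ u₂ ∧ u₁ ≠ u₃ ∧ u₁ ≠ u₄ ∧ u₂ ≠ u₃ ∧ u₂ ≠ u₄ ∧ u₃ ≠ u₄ ∧
    e₁ ≠ e₂ ∧ e₁ ≠ e₃ ∧ e₁ ≠ e₄ ∧ e₂ ≠ e₃ ∧ e₂ ≠ e₄ ∧ e₃ ≠ e₄ ∧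
    G.ends e₁ = s(u₁, u₂) ∧ G.ends e₂ = s(u₂, u₃) ∧
    G.ends e₃ = s(u₃, u₄) ∧ G.ends e₄ = s(u₄, u₁) ∧
    G.isZero e₁ ∧ G.isZero e₃ ∧
    G.degree u₂ = 2 ∧ G.degree u₄ = 2 ∧
    Q ≠ Set.univ

/-- A well-structured MAP instance: no `{0,1}`-edge-pairs, no redundant 4-cycles,
no cut nodes and no bad-pairs. -/
def WellStructured : Prop :=
  G.IsMAP ∧ G.NoZeroOnePair ∧ (∀ Q, ¬ G.IsRed4CycleOn Q) ∧
    (∀ v, ¬ G.IsCutNode v) ∧ (∀ v w, ¬ G.IsBadPair v w)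

/-- `G` is 2-node-connected: more than two nodes and deleting any one node
leaves a connected graph. -/
def TwoNC : Prop :=
  2 < Nat.card G.V ∧ ∀ v : G.V, G.ConnectedOn ({v}ᶜ) Set.univ

/-- Bridge of the sub-multigraph with node set `S` and edge set `F`: an edge of `F`
inside `S` whose removal disconnects its end nodes. -/
def IsBridgeOn (S : Set G.V) (F : Set G.E) (e : G.E) : Prop :=
  e ∈ F ∧ (∀ x ∈ G.ends e, x ∈ S) ∧
    ∀ x y, G.ends e = s(x, y) → ¬ G.Reachable S (F \ {e}) x y

/-- Bridge of the spanning subgraph `(V, F)`. -/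
def IsBridge (F : Set G.E) (e : G.E) : Prop := G.IsBridgeOn Set.univ F e

/-- `B` is (the node set of) a 2ec-block of the spanning subgraph `(V, F)`:
a maximal connected bridgeless subgraph with at least two nodes, equivalently a
connected component with at least two nodes of the graph obtained by deleting
all bridges. -/
def IsTwoECBlock (F : Set G.E) (B : Set G.V) : Prop :=
  G.IsCompOf Set.univ (F \ {e | G.IsBridge F e}) B ∧ 2 ≤ B.ncard

/-- Delete a set `D` of edges. -/
noncomputable def deleteEdges (D : Set G.E) : CostGraph where
  V := G.V
  E := {e : G.E // e ∉ D}
  finV := G.finV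
  finE := by haveI := G.finE; exact Subtype.finite
  ends e := G.ends e.1
  loopless e := G.loopless e.1
  isZero e := G.isZero e.1

/-- The sub-instance induced on a set `S` of nodes. -/
noncomputable def induce (S : Set G.V) : CostGraph where
  V := ↥S
  E := {e : G.E // ∀ x ∈ G.ends e, x ∈ S}
  finV := by haveI := G.finV; exact Subtype.finite
  finE := by haveI := G.finE; exact Subtype.finite
  ends e := (G.ends e.1).pmap Subtype.mk e.2
  loopless e := by
    intro hd
    exact G.loopless e.1
      (by simpa [Sym2.pmap_subtype_map_subtypeVal] using hd.map (f := Subtype.val))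
  isZero e := G.isZero e.1

/-- Contraction of `G` along (the equivalence generated by) a relation `R`:
node classes are identified, and edges joining identified nodes are removed
(no loops are created). -/
noncomputable def contract (R : G.V → G.V → Prop) : CostGraph where
  V := Quotient (Relation.EqvGen.setoid R)
  E := {e : G.E // ¬ (Sym2.map (Quotient.mk (Relation.EqvGen.setoid R)) (G.ends e)).IsDiag}
  finV := by haveI := G.finV; exact Quotient.finite _
  finE := by haveI := G.finE; exact Subtype.finite
  ends e := Sym2.map (Quotient.mk (Relation.EqvGen.setoid R)) (G.ends e.1)
  loopless e := e.2
  isZero e := G.isZero e.1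

/-- The relation identifying the nodes of each redundant 4-cycle. -/
def red4Rel (x y : G.V) : Prop := ∃ Q, G.IsRed4CycleOn Q ∧ x ∈ Q ∧ y ∈ Q

/-- The multigraph obtained from `G` by contracting all redundant 4-cycles. -/
noncomputable def contractRed4 : CostGraph := G.contract G.red4Rel

/-- For a bad-pair `{v,w}` and a bp-component `C`: the sub-instance `C^{v,w}`
induced on `V(C) ∪ {v, w}`. -/
noncomputable def bpUp (v w : G.V) (C : Set G.V) : CostGraph :=
  G.induce (C ∪ {v, w})

/-- For a bad-pair `{v,w}` and a bp-component `C`: the instance `C^⊘`, obtained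
from `C^{v,w}` by contracting the zero-edge `vw` if `C` has at least two nodes,
and equal to `C^{v,w}` if `C` has exactly one node. -/
noncomputable def bpContr (v w : G.V) (C : Set G.V) : CostGraph :=
  if 2 ≤ C.ncard then
    (G.bpUp v w C).contract (fun x y => x.1 = v ∧ y.1 = w)
  else G.bpUp v w C

/-- Every edge of `C^⊘` is an edge of `G`. -/
noncomputable def bpContrEdge (v w : G.V) (C : Set G.V) :
    (G.bpContr v w C).E → G.E := by
  unfold bpContr
  by_cases h : 2 ≤ C.ncard
  · rw [if_pos h]; exact fun e => e.1.1
  · rw [if_neg h]; exact fun e => e.1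

/-- The sub-multigraph `(S, F)` is 2-node-connected. -/
def TwoNCOn (S : Set G.V) (F : Set G.E) : Prop :=
  2 < S.ncard ∧ ∀ v : G.V, G.ConnectedOn (S \ {v}) F

/-- The sub-multigraph `(S, F)` consists of two nodes joined by two parallel edges. -/
def IsParallelPairBlock (S : Set G.V) (F : Set G.E) : Prop :=
  S.ncard = 2 ∧ ∃ e f, e ≠ f ∧ G.ends e = G.ends f ∧ F = {e, f}

/-- `(B i, F i)` (for `i : Fin k`) are the blocks of `G`: each block is 2-node-connected
or a pair of nodes joined by two parallel edges, the edge set of `G` is partitioned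
among the blocks, each `B i` is the set of end nodes of the edges of `F i`, and any
two blocks share at most one node. -/
def IsBlockDecomp {k : ℕ} (B : Fin k → Set G.V) (F : Fin k → Set G.E) : Prop :=
  (∀ i, ∀ e ∈ F i, ∀ x ∈ G.ends e, x ∈ B i) ∧
  (∀ i, B i = {x | ∃ e ∈ F i, x ∈ G.ends e}) ∧
  (Set.univ : Set G.E) = ⋃ i, F i ∧
  (∀ i j, i ≠ j → Disjoint (F i) (F j)) ∧
  (∀ i j, i ≠ j → (B i ∩ B j).ncard ≤ 1) ∧
  (∀ i, G.TwoNCOn (B i) (F i) ∨ G.IsParallelPairBlock (B i) (F i))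

end CostGraph

/-- `TauHatRel G t` holds when `t` is a value of `τ̂` for `G`, i.e. a value obtainable
by the following recursion: if `G` has no redundant 4-cycles and no cut nodes
(so it is well-structured provided it has no `{0,1}`-edge-pairs and no bad-pairs)
then `τ̂(G) = τ(G)`; otherwise contract all (`q`, say) redundant 4-cycles of `G`,
split the resulting graph at its cut nodes into its blocks `G₁, …, G_k`, and set
`τ̂(G) = 2q + τ̂(G₁) + … + τ̂(G_k)`. -/
inductive TauHatRel : CostGraph → ℕ → Prop where
  | base (G : CostGraph)
      (h4 : ∀ Q, ¬ G.IsRed4CycleOn Q) (hc : ∀ v, ¬ G.IsCutNode v) :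
      TauHatRel G G.tau
  | step (G : CostGraph) (k : ℕ)
      (B : Fin k → Set G.contractRed4.V) (F : Fin k → Set G.contractRed4.E)
      (t : Fin k → ℕ)
      (hobstr : (∃ Q, G.IsRed4CycleOn Q) ∨ (∃ v, G.IsCutNode v))
      (hdec : G.contractRed4.IsBlockDecomp B F)
      (ht : ∀ i, TauHatRel (G.contractRed4.induce (B i)) (t i)) :
      TauHatRel G (2 * {Q | G.IsRed4CycleOn Q}.ncard + ∑ i, t i)

namespace CostGraph

/-- `τ̂(G)`: the value associated to `G` by the recursion of `TauHatRel`. -/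
noncomputable def tauHat (G : CostGraph) : ℕ := sInf {t | TauHatRel G t}

open Classical in
/-- The lower bound `lb(G)`: `τ̂(G)` if `G` has no `{0,1}`-edge-pairs, no cut nodes
and no bad-pairs, and `opt(G)` otherwise. -/
noncomputable def lb (G : CostGraph) : ℕ :=
  if G.NoZeroOnePair ∧ (∀ v, ¬ G.IsCutNode v) ∧ (∀ v w, ¬ G.IsBadPair v w)
  then G.tauHat else G.opt

end CostGraph

/-! Among all pairs `(bad-pair {v,w}, bp-component C of {v,w} containing a bad-pair)` take one
with `C` smallest, and let `{a,b}` be a bad-pair inside `C`. Everything outside `C` reaches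
`v` in `G - {a,b}` (through `w` and the edge `vw` if necessary), so every bp-component of
`{a,b}` avoiding `v` lies in `C - a`. Hence, by minimality, none of them contains a bad-pair:
only the bp-component of `{a,b}` containing `v` can. -/

namespace CostGraph

variable {G : CostGraph} {S T : Set G.V} {F : Set G.E} {C D : Set G.V} {x y : G.V}

theorem Adj.symm (h : G.Adj S F x y) : G.Adj S F y x :=
  ⟨h.2.1, h.1, h.2.2.imp fun _ he => ⟨he.1, he.2.trans Sym2.eq_swap⟩⟩

theorem Reachable.symm (h : G.Reachable S F x y) : G.Reachable S F y x := by
  induction h with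
  | refl => exact .refl
  | tail _ hstep ih => exact ih.head hstep.symm

theorem Reachable.mono (hST : S ⊆ T) (h : G.Reachable S F x y) : G.Reachable T F x y :=
  Relation.ReflTransGen.mono (fun _ _ hadj => ⟨hST hadj.1, hST hadj.2.1, hadj.2.2⟩) _ _ h

theorem IsCompOf.mem_of_reachable (hC : G.IsCompOf S F C) (hx : x ∈ C)
    (h : G.Reachable S F x y) : y ∈ C := by
  induction h with
  | refl => exact hx
  | tail _ hstep ih => exact hC.2.2.2 _ ih _ hstep.2.1 hstep

theorem IsCompOf.subset_of_mem (hC : G.IsCompOf S F C) (hD : G.IsCompOf S F D) (hzC : x ∈ C)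
    (hzD : x ∈ D) : D ⊆ C := fun _ hy =>
  hC.mem_of_reachable hzC ((hD.2.2.1.2 _ hzD _ hy).mono hD.1)

theorem IsCompOf.eq_of_mem (hC : G.IsCompOf S F C) (hD : G.IsCompOf S F D) (hzC : x ∈ C)
    (hzD : x ∈ D) : C = D :=
  (hD.subset_of_mem hC hzD hzC).antisymm (hC.subset_of_mem hD hzC hzD)

theorem exists_isCompOf_mem (hx : x ∈ S) : ∃ C, G.IsCompOf S F C ∧ x ∈ C := by
  set C := {y | y ∈ S ∧ G.Reachable S F x y}
  have hreach : ∀ y, G.Reachable S F x y → G.Reachable C F x y := by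
    intro y h
    induction h with
    | refl => exact .refl
    | tail h hstep ih => exact ih.tail ⟨⟨hstep.1, h⟩, ⟨hstep.2.1, h.tail hstep⟩, hstep.2.2⟩
  refine ⟨C, ⟨fun y hy => hy.1, ⟨x, hx, .refl⟩, ⟨⟨x, hx, .refl⟩, ?_⟩, ?_⟩, hx, .refl⟩
  · exact fun p hp q hq => (hreach p hp.2).symm.trans (hreach q hq.2)
  · exact fun p hp q hq hadj => ⟨hq, hp.2.tail hadj⟩

theorem IsCompOf.exists_reachable_compl {X : Set G.V} {v : G.V}
    (hconn : G.ConnectedOn Set.univ F) (hC : G.IsCompOf Xᶜ F C) (hv : v ∈ X) (hx : x ∉ C) :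
    ∃ y ∈ X, G.Reachable Cᶜ F x y := by
  have hvC : v ∉ C := fun h => hC.1 h hv
  induction (hconn.2 x trivial v trivial) using Relation.ReflTransGen.head_induction_on with
  | refl => exact ⟨v, hv, .refl⟩
  | @head x c hxc _ ih =>
    by_cases hxX : x ∈ X
    · exact ⟨x, hxX, .refl⟩
    have hcC : c ∉ C := fun hcC =>
      hx (hC.2.2.2 c hcC x hxX ⟨hC.1 hcC, hxX, hxc.symm.2.2⟩)
    obtain ⟨y, hyX, hcy⟩ := ih hcC
    exact ⟨y, hyX, hcy.head ⟨hx, hcC, hxc.2.2⟩⟩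

def IsBpComponent (v w : G.V) (C : Set G.V) : Prop :=
  G.IsCompOf (({v, w} : Set G.V)ᶜ) Set.univ C

def ContainsBadPair (C : Set G.V) : Prop :=
  ∃ a b, G.IsBadPair a b ∧ a ∈ C ∧ b ∈ C

def AtMostOneBpComponentContainsBadPair (v w : G.V) : Prop :=
  ∀ C D, G.IsBpComponent v w C → G.IsBpComponent v w D →
    G.ContainsBadPair C → G.ContainsBadPair D → C = D

theorem IsBpComponent.ssubset {v w a b : G.V} {e : G.E} {E : Set G.V}
    (hconn : G.ConnectedOn Set.univ Set.univ) (he : G.ends e = s(v, w))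
    (hC : G.IsBpComponent v w C) (ha : a ∈ C) (hb : b ∈ C)
    (hE : G.IsBpComponent a b E) (hvE : v ∉ E) : E ⊂ C := by
  have hab : Cᶜ ⊆ ({a, b} : Set G.V)ᶜ := by
    simpa [Set.compl_subset_compl, Set.insert_subset_iff] using ⟨ha, hb⟩
  have hsub : E ⊆ C := by
    intro x hxE
    by_contra hxC
    obtain ⟨y, hy, hxy⟩ := hC.exists_reachable_compl hconn (Set.mem_insert v _) hxC
    have hyE : y ∈ E := hE.mem_of_reachable hxE (hxy.mono hab)
    rcases hy with rfl | rfl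
    · exact hvE hyE
    · have hwv : G.Adj ({a, b} : Set G.V)ᶜ Set.univ y v :=
        ⟨hE.1 hyE, hab fun h => hC.1 h (Set.mem_insert v _), e, trivial,
          he.trans Sym2.eq_swap⟩
      exact hvE (hE.2.2.2 y hyE v hwv.2.1 hwv)
  exact (Set.ssubset_iff_of_subset hsub).2 ⟨a, ha, fun haE => hE.1 haE (Set.mem_insert a _)⟩

theorem exists_smaller_bpComponent_containsBadPair {v w a b : G.V}
    (hconn : G.ConnectedOn Set.univ Set.univ) (hvw : G.IsBadPair v w)
    (hC : G.IsBpComponent v w C) (ha : a ∈ C) (hb : b ∈ C)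
    (hab : ¬ G.AtMostOneBpComponentContainsBadPair a b) :
    ∃ E, G.IsBpComponent a b E ∧ G.ContainsBadPair E ∧ E.ncard < C.ncard := by
  simp only [AtMostOneBpComponentContainsBadPair, not_forall] at hab
  obtain ⟨E₁, E₂, hE₁, hE₂, hbad₁, hbad₂, hne⟩ := hab
  obtain ⟨E, hE, hbad, hvE⟩ : ∃ E, G.IsBpComponent a b E ∧ G.ContainsBadPair E ∧ v ∉ E := by
    by_cases hv₁ : v ∈ E₁
    · exact ⟨E₂, hE₂, hbad₂, fun hv₂ => hne (hE₁.eq_of_mem hE₂ hv₁ hv₂)⟩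
    · exact ⟨E₁, hE₁, hbad₁, hv₁⟩
  obtain ⟨e, -, he⟩ := hvw.1
  have := G.finV
  exact ⟨E, hE, hbad, Set.ncard_lt_ncard (hC.ssubset hconn he ha hb hE hvE)⟩

theorem exists_atMostOneBpComponentContainsBadPair {v w : G.V}
    (hconn : G.ConnectedOn Set.univ Set.univ) (hvw : G.IsBadPair v w)
    (hC : G.IsBpComponent v w C) (hCbad : G.ContainsBadPair C) :
    ∃ a b, G.IsBadPair a b ∧ G.AtMostOneBpComponentContainsBadPair a b := by
  induction hn : C.ncard using Nat.strong_induction_on generalizing v w C with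
  | _ n ih =>
    obtain ⟨a, b, hab, ha, hb⟩ := hCbad
    by_cases hgood : G.AtMostOneBpComponentContainsBadPair a b
    · exact ⟨a, b, hab, hgood⟩
    obtain ⟨E, hE, hEbad, hlt⟩ :=
      exists_smaller_bpComponent_containsBadPair hconn hvw hC ha hb hgood
    exact ih _ (hn ▸ hlt) hab hE hEbad rfl

end CostGraph

/-- If a MAP instance `G` has at least one bad-pair, then there is
a bad-pair of `G` such that all but one of its bp-components contain no bad-pair
of `G` (i.e. at most one bp-component contains both nodes of some bad-pair). -/
theorem exists_badPair_with_leaf_bpComponents (G : CostGraph) (hG : G.IsMAP)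
    (h : ∃ v w, G.IsBadPair v w) :
    ∃ v w, G.IsBadPair v w ∧
      ∀ C C' : Set G.V,
        G.IsCompOf (({v, w} : Set G.V)ᶜ) Set.univ C →
        G.IsCompOf (({v, w} : Set G.V)ᶜ) Set.univ C' →
        (∃ a b, G.IsBadPair a b ∧ a ∈ C ∧ b ∈ C) →
        (∃ a b, G.IsBadPair a b ∧ a ∈ C' ∧ b ∈ C') → C = C' := by
  obtain ⟨v, w, hvw⟩ := h
  by_cases hgood : G.AtMostOneBpComponentContainsBadPair v w
  · exact ⟨v, w, hvw, hgood⟩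
  simp only [CostGraph.AtMostOneBpComponentContainsBadPair, not_forall] at hgood
  obtain ⟨C, -, hC, -, hCbad, -⟩ := hgood
  exact CostGraph.exists_atMostOneBpComponentContainsBadPair hG.2.2.1 hvw hC hCbad
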